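/- arXiv:1103.0366 — 4 statements merged into one kernel-verified Lean document; each statement's English description precedes it below -/
import Mathlib

section
/- Let X be a Banach space, δ > 0, and (ε_n) a sequence of positive reals with Σ_{n=0}^∞ ε_n < δ/4. Let (x_a)_{a∈A} be a δ-approximate bush indexed by a finitely branching tree A, i.e. for each a ∈ A with set of immediate successors S_a there are nonnegative weights (λ_β)_{β∈S_a} summing to 1 with ‖x_a − Σ_{β∈S_a} λ_β x_β‖ < ε_{|a|}. Then for each a ∈ A, the sequence x_a^m = Σ_{|β|=m} λ_β^{(a)} x_β (the iterated averages over descendants of a at level m, with weights λ_β^{(a)} obtained by multiplying the bush weights along branches) is norm Cauchy in m. -/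
open Filter Topology Pointwise

/-- A finitely branching tree: a downward-closed set of finite sequences of naturals,
with finitely many elements at each length. -/
def IsFinBranchTree (A : Set (List ℕ)) : Prop :=
  [] ∈ A ∧ (∀ a ∈ A, ∀ n : ℕ, a.take n ∈ A) ∧
    ∀ n : ℕ, {a ∈ A | a.length = n}.Finite

/-- The immediate successors of `a` in `A`. -/
def Succs (A : Set (List ℕ)) (a : List ℕ) : Set (List ℕ) :=
  {b ∈ A | a <+: b ∧ b.length = a.length + 1}

/-- The elements of `A` at level `n`. -/
def Level (A : Set (List ℕ)) (n : ℕ) : Set (List ℕ) :=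
  {a ∈ A | a.length = n}

/-- `(x_a)_{a ∈ A}` is a `δ`-approximate bush with weights `lam` and errors `ε`. -/
def IsApproxBush {X : Type*} [NormedAddCommGroup X] [NormedSpace ℝ X]
    (A : Set (List ℕ)) (x : List ℕ → X) (lam : List ℕ → ℝ)
    (δ : ℝ) (ε : ℕ → ℝ) : Prop :=
  IsFinBranchTree A ∧ (∃ M : ℝ, ∀ a ∈ A, ‖x a‖ ≤ M) ∧
    ∀ a ∈ A,
      (∀ b ∈ Succs A a, δ < ‖x a - x b‖) ∧
      (∀ b ∈ Succs A a, 0 ≤ lam b) ∧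
      (∑ᶠ b ∈ Succs A a, lam b) = 1 ∧
      ‖x a - ∑ᶠ b ∈ Succs A a, lam b • x b‖ < ε a.length

/-- The weight `λ_b^{(a)}` obtained by multiplying the bush weights along the
branch from `a` down to `b`. -/
noncomputable def branchWeight (lam : List ℕ → ℝ) (a b : List ℕ) : ℝ :=
  ∏ i ∈ Finset.Icc (a.length + 1) b.length, lam (b.take i)

/-- The iterated average `x_a^m = ∑_{|b| = m, b ≥ a} λ_b^{(a)} x_b`. -/
noncomputable def iterAvg {X : Type*} [NormedAddCommGroup X] [NormedSpace ℝ X]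
    (A : Set (List ℕ)) (x : List ℕ → X) (lam : List ℕ → ℝ)
    (a : List ℕ) (m : ℕ) : X :=
  ∑ᶠ b ∈ {b ∈ Level A m | a <+: b}, branchWeight lam a b • x b

/-- `x` is the sum of the series `∑_{k=0}^∞ ∑_{|a|=k} f a`, summed by levels. -/
def HasLevelSum {X : Type*} [NormedAddCommGroup X] [NormedSpace ℝ X]
    (A : Set (List ℕ)) (f : List ℕ → X) (x : X) : Prop :=
  Tendsto (fun n => ∑ k ∈ Finset.range n, ∑ᶠ a ∈ Level A k, f a) atTop (𝓝 x)

/-- The weak topology of a topological vector space. -/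
noncomputable def weakTop (X : Type*) [AddCommGroup X] [Module ℝ X]
    [TopologicalSpace X] : TopologicalSpace X :=
  TopologicalSpace.induced (toWeakSpace ℝ X) inferInstance

/-- The relative weak and relative norm topologies on `S` coincide. -/
def TopsCoincide {X : Type*} [NormedAddCommGroup X] [NormedSpace ℝ X]
    (S : Set X) : Prop :=
  TopologicalSpace.induced ((↑) : S → X) (weakTop X) =
    TopologicalSpace.induced ((↑) : S → X) inferInstance

/-- A normalized conditionally determined family on the tree `A`. -/
def CondDetermined (A : Set (List ℕ)) (lam : List ℕ → ℝ) : Prop :=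
  lam [] = 1 ∧ (∀ a ∈ A, 0 ≤ lam a) ∧
    ∀ a ∈ A, lam a = ∑ᶠ b ∈ Succs A a, lam b

/-- A Schauder decomposition of `X`, given by the component projections `P n`,
with decomposition constant `C`. -/
def IsSchauderDecomp {X : Type*} [NormedAddCommGroup X] [NormedSpace ℝ X]
    (P : ℕ → X →L[ℝ] X) (C : ℝ) : Prop :=
  (∀ i j, i ≠ j → ∀ v, P i (P j v) = 0) ∧
  (∀ i, ∀ v, P i (P i v) = P i v) ∧
  (∀ v : X, Tendsto (fun n => ∑ i ∈ Finset.range n, P i v) atTop (𝓝 v)) ∧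
  (∀ n, ∀ v : X, ‖∑ i ∈ Finset.range n, P i v‖ ≤ C * ‖v‖)

/-- Support of a vector with respect to a decomposition. -/
def decompSupp {X : Type*} [NormedAddCommGroup X] [NormedSpace ℝ X]
    (P : ℕ → X →L[ℝ] X) (v : X) : Set ℕ :=
  {n | P n v ≠ 0}

/-- For a `δ`-approximate bush with `∑ ε_n < δ/4`, the sequence of
iterated averages `x_a^m` is norm Cauchy in `m`, for every `a ∈ A`. -/
theorem stmt0 {X : Type*} [NormedAddCommGroup X] [NormedSpace ℝ X] [CompleteSpace X]
    (A : Set (List ℕ)) (x : List ℕ → X) (lam : List ℕ → ℝ) (δ : ℝ) (ε : ℕ → ℝ)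
    (hδ : 0 < δ) (hεpos : ∀ n, 0 < ε n) (hεlt1 : ∀ n, ε n < 1)
    (hsum : Summable ε) (hεδ : ∑' n, ε n < δ / 4)
    (hbush : IsApproxBush A x lam δ ε) :
    ∀ a ∈ A, CauchySeq (fun m => iterAvg A x lam a m) := by
  obtain ⟨⟨hnil, hdc, hfin⟩, -, hbu⟩ := hbush
  intro a ha
  have hDfin : ∀ m : ℕ, {b ∈ Level A m | a <+: b}.Finite := fun m =>
    (hfin m).subset (fun b hb => ⟨hb.1.1, hb.1.2⟩)
  have hSfin : ∀ b : List ℕ, (Succs A b).Finite := fun b =>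
    (hfin (b.length + 1)).subset (fun c hc => ⟨hc.1, hc.2.2⟩)
  set D : ℕ → Finset (List ℕ) := fun m => (hDfin m).toFinset with hD
  set S : List ℕ → Finset (List ℕ) := fun b => (hSfin b).toFinset with hS
  have hmemD : ∀ m b, b ∈ D m ↔ b ∈ A ∧ b.length = m ∧ a <+: b := by
    intro m b
    simp only [hD, Set.Finite.mem_toFinset, Set.mem_setOf_eq, Level]
    tauto
  have hmemS : ∀ b c, c ∈ S b ↔ c ∈ A ∧ b <+: c ∧ c.length = b.length + 1 := by
    intro b c
    simp only [hS, Set.Finite.mem_toFinset, Set.mem_setOf_eq, Succs]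
  have hiter : ∀ m, iterAvg A x lam a m = ∑ b ∈ D m, branchWeight lam a b • x b := fun m =>
    finsum_mem_eq_finite_toFinset_sum _ (hDfin m)
  -- pairwise disjointness of successor sets
  have hdisj : ∀ m, (↑(D m) : Set (List ℕ)).PairwiseDisjoint S := by
    intro m b hbm b' hbm' hne
    rw [Finset.mem_coe, hmemD] at hbm hbm'
    simp only [Function.onFun]
    rw [Finset.disjoint_left]
    intro c hc hc'
    rw [hmemS] at hc hc'
    apply hne
    have e1 : b = c.take b.length := List.prefix_iff_eq_take.mp hc.2.1
    have e2 : b' = c.take b'.length := List.prefix_iff_eq_take.mp hc'.2.1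
    rw [e1, e2, hbm.2.1, hbm'.2.1]
  -- decomposition of level m+1 via successors
  have hbiU : ∀ m, a.length ≤ m → D (m + 1) = (D m).biUnion S := by
    intro m hm
    ext c
    simp only [Finset.mem_biUnion, hmemD, hmemS]
    constructor
    · rintro ⟨hcA, hclen, hac⟩
      refine ⟨c.take m, ⟨hdc c hcA m, ?_, ?_⟩, hcA, List.take_prefix m c, ?_⟩
      · simp [List.length_take, hclen]
      · exact List.prefix_take_iff.mpr ⟨hac, hm⟩
      · simp [List.length_take, hclen]
    · rintro ⟨b, ⟨hbA, hblen, hab⟩, hcA, hbc, hclen⟩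
      exact ⟨hcA, by omega, hab.trans hbc⟩
  -- multiplicativity of branch weights
  have hbw : ∀ m, a.length ≤ m → ∀ b ∈ D m, ∀ c ∈ S b,
      branchWeight lam a c = branchWeight lam a b * lam c := by
    intro m hm b hbm c hcm
    rw [hmemD] at hbm
    rw [hmemS] at hcm
    have hclen : c.length = m + 1 := by rw [hcm.2.2, hbm.2.1]
    have hbtake : b = c.take m := by
      have := List.prefix_iff_eq_take.mp hcm.2.1
      rwa [hbm.2.1] at this
    simp only [branchWeight, hclen, hbm.2.1]
    rw [Finset.prod_Icc_succ_top (by omega)]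
    congr 1
    · apply Finset.prod_congr rfl
      intro i hi
      simp only [Finset.mem_Icc] at hi
      rw [hbtake, List.take_take, min_eq_left hi.2]
    · congr 1
      exact List.take_of_length_le (by omega)
  -- nonnegativity of branch weights
  have hbwnn : ∀ m, a.length ≤ m → ∀ b ∈ D m, 0 ≤ branchWeight lam a b := by
    intro m hm b hbm
    rw [hmemD] at hbm
    apply Finset.prod_nonneg
    intro i hi
    simp only [Finset.mem_Icc, hbm.2.1] at hi
    have hiA : b.take i ∈ A := hdc b hbm.1 i
    have hpA : b.take (i - 1) ∈ A := hdc b hbm.1 (i - 1)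
    have hsucc : b.take i ∈ Succs A (b.take (i - 1)) := by
      refine ⟨hiA, ?_, ?_⟩
      · rw [List.prefix_take_iff]
        exact ⟨List.take_prefix _ _, by simp only [List.length_take]; omega⟩
      · simp only [List.length_take, hbm.2.1]; omega
    exact (hbu _ hpA).2.1 _ hsucc
  -- successor weights sum to 1 (Finset version)
  have hSsum : ∀ b ∈ A, ∑ c ∈ S b, lam c = 1 := by
    intro b hbA
    have := (hbu b hbA).2.2.1
    rwa [finsum_mem_eq_finite_toFinset_sum _ (hSfin b)] at this
  -- total branch weight at each level is 1
  have hW : ∀ m, a.length ≤ m → ∑ b ∈ D m, branchWeight lam a b = 1 := by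
    intro m hm
    induction m, hm using Nat.le_induction with
    | base =>
      have hDa : D a.length = {a} := by
        ext b
        rw [hmemD, Finset.mem_singleton]
        constructor
        · rintro ⟨hbA, hlen, hab⟩
          exact (hab.eq_of_length hlen.symm).symm
        · rintro rfl
          exact ⟨ha, rfl, List.prefix_rfl⟩
      rw [hDa, Finset.sum_singleton]
      unfold branchWeight
      rw [Finset.Icc_eq_empty_of_lt (Nat.lt_succ_self a.length), Finset.prod_empty]
    | succ m hm ih =>
      rw [hbiU m hm, Finset.sum_biUnion (hdisj m)]
      rw [← ih]
      apply Finset.sum_congr rfl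
      intro b hbm
      have hbA : b ∈ A := ((hmemD m b).mp hbm).1
      calc ∑ c ∈ S b, branchWeight lam a c
          = ∑ c ∈ S b, branchWeight lam a b * lam c :=
            Finset.sum_congr rfl fun c hc => hbw m hm b hbm c hc
        _ = branchWeight lam a b * ∑ c ∈ S b, lam c := by rw [Finset.mul_sum]
        _ = branchWeight lam a b := by rw [hSsum b hbA, mul_one]
  -- the key estimate
  have hkey : ∀ m, a.length ≤ m →
      ‖iterAvg A x lam a m - iterAvg A x lam a (m + 1)‖ ≤ ε m := by
    intro m hm
    rw [hiter, hiter, hbiU m hm, Finset.sum_biUnion (hdisj m)]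
    have hstep : ∀ b ∈ D m, ∑ c ∈ S b, branchWeight lam a c • x c
        = branchWeight lam a b • ∑ c ∈ S b, lam c • x c := by
      intro b hbm
      rw [Finset.smul_sum]
      apply Finset.sum_congr rfl
      intro c hc
      rw [hbw m hm b hbm c hc, mul_smul]
    rw [Finset.sum_congr rfl hstep, ← Finset.sum_sub_distrib]
    have hterm : ∀ b ∈ D m,
        ‖branchWeight lam a b • x b - branchWeight lam a b • ∑ c ∈ S b, lam c • x c‖
          ≤ branchWeight lam a b * ε m := by
      intro b hbm
      have hbA : b ∈ A := ((hmemD m b).mp hbm).1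
      have hblen : b.length = m := ((hmemD m b).mp hbm).2.1
      rw [← smul_sub, norm_smul, Real.norm_of_nonneg (hbwnn m hm b hbm)]
      apply mul_le_mul_of_nonneg_left _ (hbwnn m hm b hbm)
      have := (hbu b hbA).2.2.2
      rw [finsum_mem_eq_finite_toFinset_sum _ (hSfin b), hblen] at this
      exact this.le
    calc ‖∑ b ∈ D m, (branchWeight lam a b • x b - branchWeight lam a b • ∑ c ∈ S b, lam c • x c)‖
        ≤ ∑ b ∈ D m, ‖branchWeight lam a b • x b - branchWeight lam a b • ∑ c ∈ S b, lam c • x c‖ :=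
          norm_sum_le _ _
      _ ≤ ∑ b ∈ D m, branchWeight lam a b * ε m := Finset.sum_le_sum hterm
      _ = (∑ b ∈ D m, branchWeight lam a b) * ε m := by rw [Finset.sum_mul]
      _ = ε m := by rw [hW m hm, one_mul]
  -- conclude Cauchy
  set f : ℕ → X := fun m => iterAvg A x lam a m with hf
  set d : ℕ → ℝ := fun n => if n < a.length then dist (f n) (f (n + 1)) else ε n with hd'
  apply cauchySeq_of_dist_le_of_summable d
  · intro n
    by_cases h : n < a.length
    · simp [hd', h]
    · simp only [hd', if_neg h]
      rw [dist_eq_norm]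
      exact hkey n (le_of_not_gt h)
  · refine (summable_nat_add_iff a.length).mp ?_
    refine (((summable_nat_add_iff a.length).mpr hsum).congr ?_)
    intro n
    simp [hd']
end

section
/- With notation and hypotheses as in the construction of the average back bush: let (x_a)_{a∈A} be a δ-approximate bush with Σ ε_n < δ/4, and define x̃_a = lim_{m→∞} x_a^m (the limit of the iterated averages). Then for every a ∈ A the exact convexity relation x̃_a = Σ_{β∈S_a} λ_β x̃_β holds, and for every a ∈ A and β ∈ S_a one has ‖x̃_a − x̃_β‖ > δ/2. -/
open Filter Topology Pointwise

namespace AvgBushAux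

variable {X : Type*} [NormedAddCommGroup X] [NormedSpace ℝ X]

/-- Nodes at level `m` extending `a`. -/
def LP (A : Set (List ℕ)) (a : List ℕ) (m : ℕ) : Set (List ℕ) :=
  {b ∈ Level A m | a <+: b}

lemma mem_LP {A : Set (List ℕ)} {a b : List ℕ} {m : ℕ} :
    b ∈ LP A a m ↔ (b ∈ A ∧ b.length = m) ∧ a <+: b := Iff.rfl

lemma mem_Succs {A : Set (List ℕ)} {a b : List ℕ} :
    b ∈ Succs A a ↔ b ∈ A ∧ (a <+: b ∧ b.length = a.length + 1) := Iff.rfl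

lemma iterAvg_eq (A : Set (List ℕ)) (x : List ℕ → X) (lam : List ℕ → ℝ) (a : List ℕ) (m : ℕ) :
    iterAvg A x lam a m = ∑ᶠ b ∈ LP A a m, branchWeight lam a b • x b := rfl

lemma LP_finite {A : Set (List ℕ)} (hA : IsFinBranchTree A) (a : List ℕ) (m : ℕ) :
    (LP A a m).Finite :=
  (hA.2.2 m).subset fun _ hb => hb.1

lemma Succs_finite {A : Set (List ℕ)} (hA : IsFinBranchTree A) (a : List ℕ) :
    (Succs A a).Finite :=
  (hA.2.2 (a.length + 1)).subset fun _ hb => ⟨hb.1, hb.2.2⟩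

lemma LP_self {A : Set (List ℕ)} {a : List ℕ} (ha : a ∈ A) : LP A a a.length = {a} := by
  ext b
  simp only [mem_LP, Set.mem_singleton_iff]
  constructor
  · rintro ⟨⟨hbA, hlen⟩, hpre⟩
    exact (hpre.eq_of_length hlen.symm).symm
  · rintro rfl; exact ⟨⟨ha, rfl⟩, List.prefix_rfl⟩

lemma branchWeight_self (lam : List ℕ → ℝ) (a : List ℕ) : branchWeight lam a a = 1 := by
  unfold branchWeight
  rw [Finset.Icc_eq_empty (by omega), Finset.prod_empty]

lemma iterAvg_self {A : Set (List ℕ)} (hA : IsFinBranchTree A)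
    (x : List ℕ → X) (lam : List ℕ → ℝ) {a : List ℕ} (ha : a ∈ A) :
    iterAvg A x lam a a.length = x a := by
  rw [iterAvg_eq, LP_self ha, finsum_mem_singleton, branchWeight_self, one_smul]

lemma LP_succ_eq {A : Set (List ℕ)} (hA : IsFinBranchTree A) {a : List ℕ} {m : ℕ}
    (hm : a.length ≤ m) :
    LP A a (m + 1) = ⋃ b ∈ LP A a m, Succs A b := by
  ext c
  simp only [Set.mem_iUnion, mem_LP, mem_Succs, exists_prop]
  constructor
  · rintro ⟨⟨hcA, hlen⟩, hpre⟩
    refine ⟨c.take m, ⟨⟨hA.2.1 c hcA m, ?_⟩, ?_⟩, hcA, List.take_prefix m c, ?_⟩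
    · rw [List.length_take, hlen]; omega
    · exact List.prefix_take_iff.mpr ⟨hpre, hm⟩
    · rw [List.length_take, hlen]; omega
  · rintro ⟨b, ⟨⟨hbA, hblen⟩, hbpre⟩, hcA, hpre, hclen⟩
    exact ⟨⟨hcA, by omega⟩, hbpre.trans hpre⟩

lemma LP_pairwiseDisjoint (A : Set (List ℕ)) (a : List ℕ) (m : ℕ) :
    (LP A a m).PairwiseDisjoint (Succs A) := by
  intro b1 h1 b2 h2 hne
  refine Set.disjoint_left.mpr fun c hc1 hc2 => hne ?_
  have e1 : b1 = c.take m := by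
    have h := List.prefix_iff_eq_take.mp hc1.2.1; rwa [h1.1.2] at h
  have e2 : b2 = c.take m := by
    have h := List.prefix_iff_eq_take.mp hc2.2.1; rwa [h2.1.2] at h
  rw [e1, e2]

lemma branchWeight_succ (lam : List ℕ → ℝ) {a b c : List ℕ} {m : ℕ}
    (hm : a.length ≤ m) (hb : b.length = m) (hc : c.length = m + 1) (hpre : b <+: c) :
    branchWeight lam a c = branchWeight lam a b * lam c := by
  unfold branchWeight
  rw [hb, hc, Finset.prod_Icc_succ_top (by omega), List.take_of_length_le (by omega)]
  congr 1
  apply Finset.prod_congr rfl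
  intro i hi
  rw [Finset.mem_Icc] at hi
  have hbc : b = c.take m := by
    have h := List.prefix_iff_eq_take.mp hpre; rwa [hb] at h
  have h2 : c.take i = b.take i := by
    rw [hbc, List.take_take, min_eq_left hi.2]
  rw [h2]

lemma level_step {A : Set (List ℕ)} (hA : IsFinBranchTree A) (lam : List ℕ → ℝ)
    (g : List ℕ → X) {a : List ℕ} {m : ℕ} (hm : a.length ≤ m) :
    ∑ᶠ c ∈ LP A a (m + 1), branchWeight lam a c • g c
      = ∑ᶠ b ∈ LP A a m, branchWeight lam a b • ∑ᶠ c ∈ Succs A b, lam c • g c := by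
  rw [LP_succ_eq hA hm,
    finsum_mem_biUnion (LP_pairwiseDisjoint A a m) (LP_finite hA a m)
      (fun b _ => Succs_finite hA b)]
  apply finsum_mem_congr rfl
  intro b hb
  rw [finsum_mem_eq_finite_toFinset_sum _ (Succs_finite hA b),
      finsum_mem_eq_finite_toFinset_sum _ (Succs_finite hA b), Finset.smul_sum]
  apply Finset.sum_congr rfl
  intro c hc
  rw [Set.Finite.mem_toFinset] at hc
  rw [branchWeight_succ lam hm hb.1.2 (by rw [hc.2.2, hb.1.2]) hc.2.1, mul_smul]

lemma branchWeight_sum_one {A : Set (List ℕ)} (hA : IsFinBranchTree A) {lam : List ℕ → ℝ}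
    (hlam : ∀ p ∈ A, (∑ᶠ b ∈ Succs A p, lam b) = 1) {a : List ℕ} (ha : a ∈ A) :
    ∀ m, a.length ≤ m → ∑ᶠ b ∈ LP A a m, branchWeight lam a b = 1 := by
  intro m hm
  induction m, hm using Nat.le_induction with
  | base =>
    rw [LP_self ha, finsum_mem_singleton, branchWeight_self]
  | succ m hm ih =>
    have h := level_step (X := ℝ) hA lam (fun _ => (1 : ℝ)) (a := a) hm
    simp only [smul_eq_mul, mul_one] at h
    calc ∑ᶠ b ∈ LP A a (m + 1), branchWeight lam a b
        = ∑ᶠ b ∈ LP A a m, branchWeight lam a b * ∑ᶠ c ∈ Succs A b, lam c := h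
      _ = ∑ᶠ b ∈ LP A a m, branchWeight lam a b := by
          apply finsum_mem_congr rfl
          intro b hb
          rw [hlam b hb.1.1, mul_one]
      _ = 1 := ih

lemma branchWeight_nonneg {A : Set (List ℕ)} (hA : IsFinBranchTree A) {lam : List ℕ → ℝ}
    (hlam : ∀ p ∈ A, ∀ q ∈ Succs A p, 0 ≤ lam q) {a b : List ℕ}
    (hb : b ∈ A) : 0 ≤ branchWeight lam a b := by
  apply Finset.prod_nonneg
  intro i hi
  rw [Finset.mem_Icc] at hi
  obtain ⟨hi1, hi2⟩ := hi
  apply hlam (b.take (i - 1)) (hA.2.1 b hb _)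
  refine ⟨hA.2.1 b hb i, ?_, ?_⟩
  · exact List.prefix_take_iff.mpr ⟨List.take_prefix _ b, by rw [List.length_take]; omega⟩
  · rw [List.length_take, List.length_take]; omega

lemma iterAvg_step_bound {A : Set (List ℕ)} {x : List ℕ → X} {lam : List ℕ → ℝ}
    {δ : ℝ} {ε : ℕ → ℝ} (hbush : IsApproxBush A x lam δ ε)
    {a : List ℕ} (ha : a ∈ A) {m : ℕ} (hm : a.length ≤ m) :
    ‖iterAvg A x lam a (m + 1) - iterAvg A x lam a m‖ ≤ ε m := by
  obtain ⟨hA, -, hb⟩ := hbush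
  have hT := LP_finite hA a m
  have hW : ∑ᶠ b ∈ LP A a m, branchWeight lam a b = 1 :=
    branchWeight_sum_one hA (fun p hp => (hb p hp).2.2.1) ha m hm
  rw [iterAvg_eq, iterAvg_eq, level_step hA lam x hm,
      finsum_mem_eq_finite_toFinset_sum _ hT, finsum_mem_eq_finite_toFinset_sum _ hT,
      ← Finset.sum_sub_distrib]
  rw [finsum_mem_eq_finite_toFinset_sum _ hT] at hW
  calc ‖∑ b ∈ hT.toFinset,
          (branchWeight lam a b • (∑ᶠ c ∈ Succs A b, lam c • x c)
            - branchWeight lam a b • x b)‖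
      ≤ ∑ b ∈ hT.toFinset,
          ‖branchWeight lam a b • ((∑ᶠ c ∈ Succs A b, lam c • x c) - x b)‖ := by
        simp_rw [smul_sub]
        exact norm_sum_le _ _
    _ ≤ ∑ b ∈ hT.toFinset, branchWeight lam a b * ε m := by
        apply Finset.sum_le_sum
        intro b hbT
        rw [Set.Finite.mem_toFinset] at hbT
        have hb0 : 0 ≤ branchWeight lam a b :=
          branchWeight_nonneg hA (fun p hp => (hb p hp).2.1) hbT.1.1
        rw [norm_smul, Real.norm_eq_abs, abs_of_nonneg hb0]
        apply mul_le_mul_of_nonneg_left _ hb0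
        rw [norm_sub_rev]
        have h3 := (hb b hbT.1.1).2.2.2
        rw [hbT.1.2] at h3
        exact h3.le
    _ = 1 * ε m := by rw [← Finset.sum_mul, hW]
    _ = ε m := one_mul _

lemma iterAvg_dist {A : Set (List ℕ)} {x : List ℕ → X} {lam : List ℕ → ℝ}
    {δ : ℝ} {ε : ℕ → ℝ} (hbush : IsApproxBush A x lam δ ε)
    {a : List ℕ} (ha : a ∈ A) :
    ∀ m, a.length ≤ m →
      ‖iterAvg A x lam a m - x a‖ ≤ ∑ k ∈ Finset.Ico a.length m, ε k := by
  intro m hm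
  induction m, hm using Nat.le_induction with
  | base => simp [iterAvg_self hbush.1 x lam ha]
  | succ m hm ih =>
    rw [Finset.sum_Ico_succ_top hm]
    calc ‖iterAvg A x lam a (m + 1) - x a‖
        ≤ ‖iterAvg A x lam a (m + 1) - iterAvg A x lam a m‖
            + ‖iterAvg A x lam a m - x a‖ := by
          simpa [dist_eq_norm] using
            dist_triangle (iterAvg A x lam a (m + 1)) (iterAvg A x lam a m) (x a)
      _ ≤ ε m + ∑ k ∈ Finset.Ico a.length m, ε k :=
          add_le_add (iterAvg_step_bound hbush ha hm) ih
      _ = ∑ k ∈ Finset.Ico a.length m, ε k + ε m := add_comm _ _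

lemma branchWeight_top (lam : List ℕ → ℝ) {a c b : List ℕ} {m : ℕ}
    (hclen : c.length = a.length + 1) (hpre : c <+: b) (hblen : b.length = m)
    (hm : a.length + 1 ≤ m) :
    branchWeight lam a b = lam c * branchWeight lam c b := by
  have hcb : c = b.take (a.length + 1) := by
    have h := List.prefix_iff_eq_take.mp hpre; rwa [hclen] at h
  unfold branchWeight
  rw [hblen, hclen,
    show Finset.Icc (a.length + 1) m = insert (a.length + 1) (Finset.Icc (a.length + 1 + 1) m)
      from by ext i; simp only [Finset.mem_Icc, Finset.mem_insert]; omega,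
    Finset.prod_insert (by simp only [Finset.mem_Icc]; omega), ← hcb]

lemma LP_top_eq {A : Set (List ℕ)} (hA : IsFinBranchTree A) {a : List ℕ} {m : ℕ}
    (hm : a.length + 1 ≤ m) :
    LP A a m = ⋃ c ∈ Succs A a, LP A c m := by
  ext b
  simp only [Set.mem_iUnion, mem_LP, mem_Succs, exists_prop]
  constructor
  · rintro ⟨⟨hbA, hblen⟩, hpre⟩
    refine ⟨b.take (a.length + 1), ⟨hA.2.1 b hbA _, ?_, ?_⟩, ⟨hbA, hblen⟩,
      List.take_prefix _ _⟩
    · exact List.prefix_take_iff.mpr ⟨hpre, by omega⟩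
    · rw [List.length_take]; omega
  · rintro ⟨c, ⟨hcA, hcpre, hclen⟩, ⟨hbA, hblen⟩, hpre⟩
    exact ⟨⟨hbA, hblen⟩, hcpre.trans hpre⟩

lemma Succs_pairwiseDisjoint_LP (A : Set (List ℕ)) (a : List ℕ) (m : ℕ) :
    (Succs A a).PairwiseDisjoint (fun c => LP A c m) := by
  intro c1 h1 c2 h2 hne
  refine Set.disjoint_left.mpr fun b hb1 hb2 => hne ?_
  have e1 : c1 = b.take (a.length + 1) := by
    have h := List.prefix_iff_eq_take.mp hb1.2; rwa [h1.2.2] at h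
  have e2 : c2 = b.take (a.length + 1) := by
    have h := List.prefix_iff_eq_take.mp hb2.2; rwa [h2.2.2] at h
  rw [e1, e2]

lemma iterAvg_split {A : Set (List ℕ)} (hA : IsFinBranchTree A)
    (x : List ℕ → X) (lam : List ℕ → ℝ) {a : List ℕ} {m : ℕ}
    (hm : a.length + 1 ≤ m) :
    iterAvg A x lam a m = ∑ᶠ c ∈ Succs A a, lam c • iterAvg A x lam c m := by
  rw [iterAvg_eq, LP_top_eq hA hm,
    finsum_mem_biUnion (Succs_pairwiseDisjoint_LP A a m) (Succs_finite hA a)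
      (fun c _ => LP_finite hA c m)]
  apply finsum_mem_congr rfl
  intro c hc
  rw [iterAvg_eq, finsum_mem_eq_finite_toFinset_sum _ (LP_finite hA c m),
      finsum_mem_eq_finite_toFinset_sum _ (LP_finite hA c m), Finset.smul_sum]
  apply Finset.sum_congr rfl
  intro b hbT
  rw [Set.Finite.mem_toFinset] at hbT
  rw [branchWeight_top lam hc.2.2 hbT.2 hbT.1.2 hm, mul_smul]

end AvgBushAux

open AvgBushAux in

/-- For a `δ`-approximate bush with `∑ ε_n < δ/4`, the average back
bush `x̃_a = lim_m x_a^m` satisfies the exact convexity relation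
`x̃_a = ∑_{β ∈ S_a} λ_β x̃_β` and `‖x̃_a − x̃_β‖ > δ/2` for `β ∈ S_a`. -/
theorem stmt1 {X : Type*} [NormedAddCommGroup X] [NormedSpace ℝ X] [CompleteSpace X]
    (A : Set (List ℕ)) (x : List ℕ → X) (lam : List ℕ → ℝ) (δ : ℝ) (ε : ℕ → ℝ)
    (hδ : 0 < δ) (hεpos : ∀ n, 0 < ε n) (hεlt1 : ∀ n, ε n < 1)
    (hsum : Summable ε) (hεδ : ∑' n, ε n < δ / 4)
    (hbush : IsApproxBush A x lam δ ε)
    (xt : List ℕ → X)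
    (hxt : ∀ a ∈ A, Tendsto (fun m => iterAvg A x lam a m) atTop (𝓝 (xt a))) :
    ∀ a ∈ A, xt a = (∑ᶠ b ∈ Succs A a, lam b • xt b) ∧
      ∀ b ∈ Succs A a, δ / 2 < ‖xt a - xt b‖ := by
  have hA := hbush.1
  have hx := hbush.2.2
  have hdist : ∀ p ∈ A, ‖xt p - x p‖ ≤ ∑' n, ε n := by
    intro p hp
    have htend : Tendsto (fun m => ‖iterAvg A x lam p m - x p‖) atTop (𝓝 ‖xt p - x p‖) :=
      ((hxt p hp).sub tendsto_const_nhds).norm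
    apply le_of_tendsto htend
    filter_upwards [eventually_ge_atTop p.length] with m hm
    calc ‖iterAvg A x lam p m - x p‖ ≤ ∑ k ∈ Finset.Ico p.length m, ε k :=
          iterAvg_dist hbush hp m hm
      _ ≤ ∑' n, ε n := Summable.sum_le_tsum _ (fun i _ => (hεpos i).le) hsum
  intro a ha
  constructor
  · have hS := Succs_finite hA a
    have h2 : Tendsto (fun m => ∑ᶠ c ∈ Succs A a, lam c • iterAvg A x lam c m) atTop
        (𝓝 (∑ᶠ c ∈ Succs A a, lam c • xt c)) := by
      simp only [finsum_mem_eq_finite_toFinset_sum _ hS]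
      apply tendsto_finset_sum
      intro c hc
      rw [Set.Finite.mem_toFinset] at hc
      exact (hxt c hc.1).const_smul (lam c)
    refine tendsto_nhds_unique (hxt a ha) (Filter.Tendsto.congr' ?_ h2)
    filter_upwards [eventually_ge_atTop (a.length + 1)] with m hm
    exact (iterAvg_split hA x lam hm).symm
  · intro b hb
    have hbA : b ∈ A := hb.1
    have h1 := hdist a ha
    have h2 := hdist b hbA
    have h3 : δ < ‖x a - x b‖ := (hx a ha).1 b hb
    have h4 : ‖x a - x b‖ ≤ ‖x a - xt a‖ + ‖xt a - xt b‖ + ‖xt b - x b‖ := by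
      simpa [dist_eq_norm] using dist_triangle4 (x a) (xt a) (xt b) (x b)
    have h5 : ‖x a - xt a‖ = ‖xt a - x a‖ := norm_sub_rev _ _
    have h6 : ‖xt b - x b‖ = ‖x b - xt b‖ := norm_sub_rev _ _
    linarith [norm_sub_rev (xt b) (x b)]
end

section
/- Let X be a Banach space, A a finitely branching tree, (y_a)_{a∈A} and (y'_a)_{a∈A} families in X, and (ε_n)_{n≥0} positive reals with Σ_n ε_n < ∞ and ‖y_a − y'_a‖ < ε_{|a|} for all a. Define r_a = Σ_{γ ≤ a} (y_γ − y'_γ) (sum over all predecessors γ of a, including a itself). Then the set {r_a : a ∈ A} is totally bounded, and hence its closed convex hull is norm compact. -/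
open Filter Topology Pointwise

/-!
Write `r_a` as the sum of `d_γ = y_γ - y'_γ` along the branch of `a`. Cutting the branch at
depth `M` moves `r_a` by at most the tail `∑_{n > M} ε_n`, which is small for large `M`; and
since the tree is finitely branching there are only finitely many nodes of depth at most `M`,
so finitely many `r_b` form a `δ`-net. The closed convex hull of a totally bounded set in a
Banach space is compact.
-/

open Finset

lemma IsFinBranchTree.finite_length_le {A : Set (List ℕ)} (hA : IsFinBranchTree A) (M : ℕ) :
    {a ∈ A | a.length ≤ M}.Finite := by
  refine ((Set.finite_Iic M).biUnion fun k _ => hA.2.2 k).subset ?_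
  rintro a ⟨ha, hlen⟩
  exact Set.mem_biUnion hlen ⟨ha, rfl⟩

lemma IsFinBranchTree.take_mem {A : Set (List ℕ)} (hA : IsFinBranchTree A) {a : List ℕ}
    (ha : a ∈ A) (n : ℕ) : a.take n ∈ A :=
  hA.2.1 a ha n

lemma norm_sum_Ico_le_tsum_nat_add {X : Type*} [SeminormedAddCommGroup X] {f : ℕ → X}
    {ε : ℕ → ℝ} (hε : ∀ n, 0 ≤ ε n) (hsum : Summable ε) {m n : ℕ}
    (hf : ∀ i ∈ Ico m n, ‖f i‖ ≤ ε i) :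
    ‖∑ i ∈ Ico m n, f i‖ ≤ ∑' k, ε (k + m) :=
  calc ‖∑ i ∈ Ico m n, f i‖
      ≤ ∑ i ∈ Ico m n, ε i := norm_sum_le_of_le _ hf
    _ = ∑ k ∈ range (n - m), ε (k + m) := by
        rw [sum_Ico_eq_sum_range]
        simp only [Nat.add_comm m]
    _ ≤ ∑' k, ε (k + m) :=
        ((summable_nat_add_iff m).mpr hsum).sum_le_tsum _ fun k _ => hε _

section BranchSum

variable {X : Type*} [NormedAddCommGroup X]

/-- The paper's `∑_{γ ≤ a} d_γ`: `a.take i` for `i ≤ a.length` runs through the initial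
segments of `a`, from `[]` to `a`. -/
def branchSum (d : List ℕ → X) (a : List ℕ) : X :=
  ∑ i ∈ range (a.length + 1), d (a.take i)

lemma branchSum_sub_branchSum_take (d : List ℕ → X) {a : List ℕ} {M : ℕ}
    (hM : M ≤ a.length) :
    branchSum d a - branchSum d (a.take M) = ∑ i ∈ Ico (M + 1) (a.length + 1), d (a.take i) := by
  have htake : branchSum d (a.take M) = ∑ i ∈ range (M + 1), d (a.take i) := by
    rw [branchSum, List.length_take, Nat.min_eq_left hM]
    refine sum_congr rfl fun i hi => ?_
    rw [List.take_take, Nat.min_eq_left (Nat.lt_succ_iff.mp (mem_range.mp hi))]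
  rw [htake, sum_Ico_eq_sub _ (Nat.succ_le_succ hM), branchSum]

theorem totallyBounded_image_branchSum {A : Set (List ℕ)} (hA : IsFinBranchTree A)
    {d : List ℕ → X} {ε : ℕ → ℝ} (hε : ∀ n, 0 ≤ ε n) (hsum : Summable ε)
    (hd : ∀ a ∈ A, ‖d a‖ ≤ ε a.length) :
    TotallyBounded (branchSum d '' A) := by
  rw [Metric.totallyBounded_iff]
  intro δ hδ
  obtain ⟨M, hM⟩ := eventually_atTop.1 ((tendsto_sum_nat_add ε).eventually (gt_mem_nhds hδ))
  refine ⟨branchSum d '' {a ∈ A | a.length ≤ M}, (hA.finite_length_le M).image _, ?_⟩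
  rintro _ ⟨a, ha, rfl⟩
  refine Set.mem_biUnion ⟨a.take M, ⟨hA.take_mem ha M, List.length_take_le _ _⟩, rfl⟩ ?_
  rw [Metric.mem_ball, dist_eq_norm]
  rcases le_total a.length M with hshort | hlong
  · simpa [List.take_of_length_le hshort] using hδ
  rw [branchSum_sub_branchSum_take d hlong]
  refine (norm_sum_Ico_le_tsum_nat_add hε hsum fun i hi => ?_).trans_lt (hM (M + 1) M.le_succ)
  have hi' : i ≤ a.length := Nat.lt_succ_iff.mp (mem_Ico.mp hi).2
  simpa [Nat.min_eq_left hi'] using hd _ (hA.take_mem ha i)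

end BranchSum

/-- if `‖y_a − y'_a‖ < ε_{|a|}` with `∑ ε_n < ∞`, then the set of
partial sums along branches `r_a = ∑_{γ ≤ a} (y_γ − y'_γ)` is totally bounded,
and its closed convex hull is norm compact. -/
theorem stmt4 {X : Type*} [NormedAddCommGroup X] [NormedSpace ℝ X] [CompleteSpace X]
    (A : Set (List ℕ)) (hA : IsFinBranchTree A)
    (y y' : List ℕ → X) (ε : ℕ → ℝ) (hεpos : ∀ n, 0 < ε n) (hsum : Summable ε)
    (hclose : ∀ a ∈ A, ‖y a - y' a‖ < ε a.length) :
    TotallyBounded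
      {r : X | ∃ a ∈ A,
        r = ∑ i ∈ Finset.range (a.length + 1), (y (a.take i) - y' (a.take i))} ∧
    IsCompact (closure (convexHull ℝ
      {r : X | ∃ a ∈ A,
        r = ∑ i ∈ Finset.range (a.length + 1), (y (a.take i) - y' (a.take i))})) := by
  have hset : {r : X | ∃ a ∈ A,
        r = ∑ i ∈ Finset.range (a.length + 1), (y (a.take i) - y' (a.take i))} =
      branchSum (fun a => y a - y' a) '' A := by
    ext r
    exact exists_congr fun a => and_congr_right' eq_comm
  have hTB : TotallyBounded (branchSum (fun a => y a - y' a) '' A) :=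
    totallyBounded_image_branchSum hA (fun n => (hεpos n).le) hsum fun a ha => (hclose a ha).le
  rw [hset]
  exact ⟨hTB, hTB.convexHull.closure.isCompact_of_isClosed isClosed_closure⟩
end

section
/- Let X_k, k ∈ ℕ, be Banach spaces and X = (Σ_k ⊕ X_k)_0 their c0-sum, i.e. sequences (x_k) with x_k ∈ X_k and ‖x_k‖ → 0, with the supremum norm. Let A be a finitely branching tree and (y_a)_{a∈A} a bounded family in X which is block: there exist pairwise disjoint intervals (I_a)_{a∈A} of ℕ, increasing in the lexicographic order of A, with supp(y_a) ⊆ I_a, and assume y_a ≠ 0 for all a. Let L be the set of all x = Σ_{k=0}^∞ Σ_{|a|=k} λ^{(x)}_a y_a with λ^{(x)}_∅ = 1, λ^{(x)}_a ≥ 0, λ^{(x)}_a = Σ_{b∈S_a} λ^{(x)}_b, and lim_k max{λ^{(x)}_a : |a| = k} = 0. Then on L the weak and norm topologies coincide. -/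
open Filter Topology Pointwise

/-!
The coefficient `λ_a` of a point of `L` is a continuous linear functional of the point: choose a
coordinate `k` in the support of `y_a`, where no other `y_b` lives, and rescale a functional
norming `P k (y a)`. A weak neighbourhood of `x ∈ L` therefore controls the finitely many
coefficients up to a level `k` beyond which `λ^{(x)}_a < η`. Coefficients decrease along branches,
so every coefficient of a nearby `x' ∈ L` is within `2η` of that of `x`; as the `y_a` have
disjoint supports, the sup norm gives `‖x' - x‖ ≤ 2η · sup_a ‖y_a‖`.
-/

namespace IsFinBranchTree

variable {A : Set (List ℕ)} {w : List ℕ → ℝ}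

theorem finite_succs (hA : IsFinBranchTree A) (a : List ℕ) : (Succs A a).Finite :=
  (hA.2.2 (a.length + 1)).subset fun _ hb => ⟨hb.1, hb.2.2⟩

theorem finite_setOf_length_le (hA : IsFinBranchTree A) (k : ℕ) :
    {a ∈ A | a.length ≤ k}.Finite :=
  ((Set.finite_Iic k).biUnion fun j _ => hA.2.2 j).subset fun a ha =>
    Set.mem_biUnion (show a.length ∈ Set.Iic k from ha.2) ⟨ha.1, rfl⟩

theorem take_succ_mem_succs (hA : IsFinBranchTree A) {b : List ℕ} (hb : b ∈ A) {m : ℕ}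
    (hm : m < b.length) : b.take (m + 1) ∈ Succs A (b.take m) :=
  ⟨hA.2.1 b hb _, (List.prefix_take_le_iff (by omega)).2 (by omega), by simp; omega⟩

theorem le_of_mem_succs (hA : IsFinBranchTree A) (hw0 : ∀ a ∈ A, 0 ≤ w a) {a b : List ℕ}
    (ha : w a = ∑ᶠ c ∈ Succs A a, w c) (hb : b ∈ Succs A a) : w b ≤ w a := by
  rw [ha, finsum_mem_eq_finite_toFinset_sum _ (hA.finite_succs a)]
  exact Finset.single_le_sum (fun c hc => hw0 c ((Set.Finite.mem_toFinset _).1 hc).1)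
    ((Set.Finite.mem_toFinset _).2 hb)

theorem antitone_take (hA : IsFinBranchTree A) (hw0 : ∀ a ∈ A, 0 ≤ w a)
    (hw : ∀ a ∈ A, w a = ∑ᶠ b ∈ Succs A a, w b) {b : List ℕ} (hb : b ∈ A) :
    Antitone fun m => w (b.take m) := by
  refine antitone_nat_of_succ_le fun m => ?_
  rcases lt_or_ge m b.length with hm | hm
  · exact hA.le_of_mem_succs hw0 (hw _ (hA.2.1 b hb m)) (hA.take_succ_mem_succs hb hm)
  · simp [List.take_of_length_le hm, List.take_of_length_le (hm.trans m.le_succ)]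

theorem abs_sub_lt_two_mul (hA : IsFinBranchTree A) {lam μ : List ℕ → ℝ}
    (hlam0 : ∀ a ∈ A, 0 ≤ lam a) (hlam : ∀ a ∈ A, lam a = ∑ᶠ b ∈ Succs A a, lam b)
    (hμ0 : ∀ a ∈ A, 0 ≤ μ a) (hμ : ∀ a ∈ A, μ a = ∑ᶠ b ∈ Succs A a, μ b) {k : ℕ} {ε : ℝ}
    (hsmall : ∀ a ∈ A, k ≤ a.length → lam a < ε)
    (hclose : ∀ a ∈ A, a.length ≤ k → |μ a - lam a| < ε) {a : List ℕ} (ha : a ∈ A) :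
    |μ a - lam a| < 2 * ε := by
  rcases le_or_gt a.length k with hak | hak
  · linarith [hclose a ha hak, abs_nonneg (μ a - lam a)]
  have hc : a.take k ∈ A := hA.2.1 a ha k
  have hck : (a.take k).length = k := by simp; omega
  have hlam_le : lam a ≤ lam (a.take k) := by
    simpa using hA.antitone_take hlam0 hlam ha hak.le
  have hμ_le : μ a ≤ μ (a.take k) := by
    simpa using hA.antitone_take hμ0 hμ ha hak.le
  have hc_close := abs_sub_lt_iff.1 (hclose _ hc hck.le)
  have hc_small := hsmall _ hc hck.ge
  rw [abs_sub_lt_iff]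
  constructor <;> linarith [hlam0 a ha, hμ0 a ha]

end IsFinBranchTree

namespace HasLevelSum

variable {X F : Type*} [NormedAddCommGroup X] [NormedSpace ℝ X] [NormedAddCommGroup F]
  [NormedSpace ℝ F] {A : Set (List ℕ)} {f g : List ℕ → X} {x x' : X}

theorem map (hfin : ∀ n, (Level A n).Finite) (φ : X →L[ℝ] F) (h : HasLevelSum A f x) :
    HasLevelSum A (fun a => φ (f a)) (φ x) := by
  refine ((φ.continuous.tendsto x).comp h).congr fun n => ?_
  simp only [Function.comp_apply, map_sum]
  refine Finset.sum_congr rfl fun k _ => ?_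
  rw [finsum_mem_eq_finite_toFinset_sum _ (hfin k), finsum_mem_eq_finite_toFinset_sum _ (hfin k),
    map_sum]

theorem sub (hfin : ∀ n, (Level A n).Finite) (hf : HasLevelSum A f x)
    (hg : HasLevelSum A g x') : HasLevelSum A (fun a => f a - g a) (x - x') := by
  refine (Tendsto.sub hf hg).congr fun n => ?_
  simp only [← Finset.sum_sub_distrib]
  exact Finset.sum_congr rfl fun k _ => (finsum_mem_sub_distrib f g (hfin k)).symm

theorem eq_of_forall_ne (h : HasLevelSum A f x) {a : List ℕ} (ha : a ∈ A)
    (hf : ∀ b ∈ A, b ≠ a → f b = 0) : x = f a := by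
  have hlevel : ∀ k, ∑ᶠ b ∈ Level A k, f b = if k = a.length then f a else 0 := by
    intro k
    split_ifs with hk
    · rw [finsum_mem_def, finsum_eq_single _ a fun b hba =>
        Set.indicator_apply_eq_zero.2 fun hb => hf b hb.1 hba]
      exact Set.indicator_of_mem (show a ∈ Level A k from ⟨ha, hk.symm⟩) f
    · exact finsum_mem_eq_zero_of_forall_eq_zero fun b hb =>
        hf b hb.1 (by rintro rfl; exact hk hb.2.symm)
  refine tendsto_nhds_unique h (tendsto_const_nhds.congr' ?_)
  filter_upwards [Filter.eventually_gt_atTop a.length] with n hn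
  simp [hlevel, hn]

end HasLevelSum

section SupNorm

variable {X : Type*} [NormedAddCommGroup X] [NormedSpace ℝ X] {P : ℕ → X →L[ℝ] X}

theorem decompSupp_smul_subset (c : ℝ) (v : X) : decompSupp P (c • v) ⊆ decompSupp P v :=
  fun _ hn => (by simpa [decompSupp] using hn : _ ∧ _).2

theorem norm_apply_le_of_norm_eq_iSup (hc0 : ∀ v : X, ‖v‖ = ⨆ k : ℕ, ‖P k v‖) (k : ℕ) (v : X) :
    ‖P k v‖ ≤ ‖v‖ := by
  by_cases hb : BddAbove (Set.range fun k => ‖P k v‖)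
  · exact (hc0 v).ge.trans' (le_ciSup hb k)
  · have hv : v = 0 := norm_eq_zero.1 ((hc0 v).trans (Real.iSup_of_not_bddAbove hb))
    simp [hv]

theorem exists_apply_ne_zero (hc0 : ∀ v : X, ‖v‖ = ⨆ k : ℕ, ‖P k v‖) {v : X} (hv : v ≠ 0) :
    ∃ k, P k v ≠ 0 := by
  by_contra! h
  exact hv (norm_eq_zero.1 (by simp [hc0 v, h]))

variable {ι : Type*} {s : Set ι} {f : ι → X}

theorem exists_forall_ne_apply_eq_zero (hs : s.Nonempty)
    (hd : s.PairwiseDisjoint (decompSupp P ∘ f)) (k : ℕ) :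
    ∃ a ∈ s, ∀ b ∈ s, b ≠ a → P k (f b) = 0 := by
  by_cases h : ∃ a ∈ s, P k (f a) ≠ 0
  · obtain ⟨a, ha, hka⟩ := h
    refine ⟨a, ha, fun b hb hba => ?_⟩
    by_contra hkb
    exact Set.disjoint_left.1 (hd hb ha hba) hkb hka
  · push Not at h
    obtain ⟨a, ha⟩ := hs
    exact ⟨a, ha, fun b hb _ => h b hb⟩

theorem exists_dual_eq_one_and_eq_zero (hc0 : ∀ v : X, ‖v‖ = ⨆ k : ℕ, ‖P k v‖)
    (hd : s.PairwiseDisjoint (decompSupp P ∘ f)) {a : ι} (ha : a ∈ s) (hfa : f a ≠ 0) :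
    ∃ g : X →L[ℝ] ℝ, g (f a) = 1 ∧ ∀ b ∈ s, b ≠ a → g (f b) = 0 := by
  obtain ⟨k, hk⟩ := exists_apply_ne_zero hc0 hfa
  obtain ⟨g, -, hg⟩ := exists_dual_vector ℝ (P k (f a)) (norm_ne_zero_iff.2 hk)
  refine ⟨‖P k (f a)‖⁻¹ • g.comp (P k), by simp [hg, norm_ne_zero_iff.2 hk], fun b hb hba => ?_⟩
  have hkb : P k (f b) = 0 := by
    by_contra hkb
    exact Set.disjoint_left.1 (hd hb ha hba) hkb hk
  simp [hkb]

end SupNorm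

section LevelSum

variable {X : Type*} [NormedAddCommGroup X] [NormedSpace ℝ X] {P : ℕ → X →L[ℝ] X}
  {A : Set (List ℕ)} {f : List ℕ → X} {x : X}

theorem norm_le_of_hasLevelSum (hc0 : ∀ v : X, ‖v‖ = ⨆ k : ℕ, ‖P k v‖)
    (hA : IsFinBranchTree A) (hd : A.PairwiseDisjoint (decompSupp P ∘ f))
    (h : HasLevelSum A f x) {K : ℝ} (hK : ∀ a ∈ A, ‖f a‖ ≤ K) : ‖x‖ ≤ K := by
  rw [hc0 x]
  refine ciSup_le fun k => ?_
  obtain ⟨a, ha, hzero⟩ := exists_forall_ne_apply_eq_zero ⟨[], hA.1⟩ hd k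
  rw [(h.map hA.2.2 (P k)).eq_of_forall_ne ha hzero]
  exact (norm_apply_le_of_norm_eq_iSup hc0 k (f a)).trans (hK a ha)

theorem exists_dual_apply_eq_coeff (hc0 : ∀ v : X, ‖v‖ = ⨆ k : ℕ, ‖P k v‖)
    (hfin : ∀ n, (Level A n).Finite) {y : List ℕ → X}
    (hd : A.PairwiseDisjoint (decompSupp P ∘ y)) {a : List ℕ} (ha : a ∈ A) (hya : y a ≠ 0) :
    ∃ g : X →L[ℝ] ℝ, ∀ (w : List ℕ → ℝ) (x : X),
      HasLevelSum A (fun b => w b • y b) x → g x = w a := by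
  obtain ⟨g, hga, hgb⟩ := exists_dual_eq_one_and_eq_zero hc0 hd ha hya
  refine ⟨g, fun w x hx => ?_⟩
  simpa [hga] using (hx.map hfin g).eq_of_forall_ne ha fun b hb hba => by simp [hgb b hb hba]

end LevelSum

section Weak

variable {X : Type*} [NormedAddCommGroup X] [NormedSpace ℝ X]

theorem continuous_weakTop (g : X →L[ℝ] ℝ) : Continuous[weakTop X, _] g :=
  @Continuous.comp X (WeakSpace ℝ X) ℝ (weakTop X) _ _ _ _
    (WeakBilin.eval_continuous (topDualPairing ℝ X).flip g) continuous_induced_dom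

theorem topsCoincide_of_forall_exists_finset {S : Set X}
    (h : ∀ p ∈ S, ∀ ε > 0, ∃ T : Finset (X →L[ℝ] ℝ), ∃ δ > 0,
      ∀ q ∈ S, (∀ g ∈ T, |g q - g p| < δ) → ‖q - p‖ < ε) :
    TopsCoincide S := by
  refine le_antisymm (le_of_nhds_le_nhds fun p => ?_) (induced_mono ?_)
  · rw [@nhds_induced _ _ (weakTop X), nhds_induced, (Metric.nhds_basis_ball.comap _).ge_iff]
    intro ε hε
    obtain ⟨T, δ, hδ, hT⟩ := h p p.2 ε hε
    have hU : ⋂ g ∈ T, g ⁻¹' Metric.ball (g p) δ ∈ @nhds X (weakTop X) p :=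
      (Filter.biInter_finset_mem T).2 fun g _ =>
        @ContinuousAt.preimage_mem_nhds X ℝ (weakTop X) _ _ _ _
          (@Continuous.continuousAt X ℝ (weakTop X) _ _ _ (continuous_weakTop g))
          (Metric.ball_mem_nhds _ hδ)
    refine Filter.mem_comap.2 ⟨_, hU, fun q hq => ?_⟩
    simp only [Set.mem_preimage, Set.mem_iInter, Metric.mem_ball, Real.dist_eq] at hq
    simpa [Subtype.dist_eq, dist_eq_norm] using hT q q.2 hq
  · exact continuous_iff_le_induced.1 (toWeakSpaceCLM ℝ X).continuous

end Weak

theorem stmt13_general {X : Type*} [NormedAddCommGroup X] [NormedSpace ℝ X]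
    (P : ℕ → X →L[ℝ] X)
    (hc0 : ∀ v : X, ‖v‖ = ⨆ k : ℕ, ‖P k v‖)
    (A : Set (List ℕ)) (hA : IsFinBranchTree A)
    (y : List ℕ → X) (hbdd : ∃ M : ℝ, ∀ a ∈ A, ‖y a‖ ≤ M)
    (I : List ℕ → Finset ℕ)
    (hsupp : ∀ a ∈ A, ∀ n : ℕ, P n (y a) ≠ 0 → n ∈ I a)
    (hdisj : ∀ a ∈ A, ∀ b ∈ A, a ≠ b → Disjoint (I a) (I b))
    (hy0 : ∀ a ∈ A, y a ≠ 0)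
    (L : Set X)
    (hL : L = {x : X | ∃ lam : List ℕ → ℝ, lam [] = 1 ∧ (∀ a ∈ A, 0 ≤ lam a) ∧
      (∀ a ∈ A, lam a = ∑ᶠ b ∈ Succs A a, lam b) ∧
      (∀ ε > (0 : ℝ), ∃ n₀ : ℕ, ∀ a ∈ A, n₀ ≤ a.length → lam a < ε) ∧
      HasLevelSum A (fun a => lam a • y a) x}) :
    TopsCoincide L := by
  classical
  subst hL
  obtain ⟨M, hM⟩ := hbdd
  have hM0 : 0 ≤ M := (norm_nonneg _).trans (hM [] hA.1)
  have hd : A.PairwiseDisjoint (decompSupp P ∘ y) := fun a ha b hb hab =>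
    Set.disjoint_left.2 fun n hna hnb =>
      Finset.disjoint_left.1 (hdisj a ha b hb hab) (hsupp a ha n hna) (hsupp b hb n hnb)
  choose! g hg using fun a ha => exists_dual_apply_eq_coeff hc0 hA.2.2 hd ha (hy0 a ha)
  refine topsCoincide_of_forall_exists_finset fun p hp ε hε => ?_
  obtain ⟨lam, -, hlam0, hlam, hsmall, hp⟩ := hp
  set η := ε / (2 * (M + 1)) with hη
  have hη0 : 0 < η := by positivity
  obtain ⟨k, hk⟩ := hsmall η hη0
  refine ⟨(hA.finite_setOf_length_le k).toFinset.image g, η, hη0, fun q hq hclose => ?_⟩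
  obtain ⟨μ, -, hμ0, hμ, -, hq⟩ := hq
  have hcoeff : ∀ a ∈ A, |μ a - lam a| < 2 * η := fun a ha =>
    hA.abs_sub_lt_two_mul hlam0 hlam hμ0 hμ hk (fun b hb hbk => by
      simpa [hg b hb _ _ hq, hg b hb _ _ hp] using
        hclose (g b) (Finset.mem_image_of_mem g (by simp [hb, hbk]))) ha
  calc ‖q - p‖ ≤ 2 * η * M := by
        refine norm_le_of_hasLevelSum hc0 hA
          (hd.mono fun a => decompSupp_smul_subset (μ a - lam a) (y a)) ?_ fun a ha => ?_
        · simpa [sub_smul] using hq.sub hA.2.2 hp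
        · rw [norm_smul, Real.norm_eq_abs]
          exact mul_le_mul (hcoeff a ha).le (hM a ha) (norm_nonneg _) (by positivity)
    _ < ε := by rw [hη]; field_simp; linarith

/-- Lemma 2.7, all nodes nonzero: let `X` be a `c₀`-sum of Banach
spaces (encoded by a Schauder decomposition `P` whose norm is the sup of the
component norms), `(y_a)_{a ∈ A}` a bounded block family (supports contained in
pairwise disjoint, lexicographically increasing intervals `I_a`) with
`y_a ≠ 0`. Let `L` be the set of all sums `∑_k ∑_{|a|=k} λ_a y_a` with
`λ_∅ = 1`, `λ_a ≥ 0`, `λ_a = ∑_{b ∈ S_a} λ_b` and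
`max{λ_a : |a| = k} → 0`. Then on `L` the weak and norm topologies coincide. -/
theorem stmt13 {X : Type*} [NormedAddCommGroup X] [NormedSpace ℝ X] [CompleteSpace X]
    (P : ℕ → X →L[ℝ] X) (C : ℝ) (hP : IsSchauderDecomp P C)
    (hc0 : ∀ v : X, ‖v‖ = ⨆ k : ℕ, ‖P k v‖)
    (A : Set (List ℕ)) (hA : IsFinBranchTree A)
    (y : List ℕ → X) (hbdd : ∃ M : ℝ, ∀ a ∈ A, ‖y a‖ ≤ M)
    (I : List ℕ → Finset ℕ)
    (hsupp : ∀ a ∈ A, ∀ n : ℕ, P n (y a) ≠ 0 → n ∈ I a)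
    (hdisj : ∀ a ∈ A, ∀ b ∈ A, a ≠ b → Disjoint (I a) (I b))
    (hlex : ∀ a ∈ A, ∀ b ∈ A, List.Lex (· < ·) a b →
      ∀ i ∈ I a, ∀ j ∈ I b, i < j)
    (hy0 : ∀ a ∈ A, y a ≠ 0)
    (L : Set X)
    (hL : L = {x : X | ∃ lam : List ℕ → ℝ, lam [] = 1 ∧ (∀ a ∈ A, 0 ≤ lam a) ∧
      (∀ a ∈ A, lam a = ∑ᶠ b ∈ Succs A a, lam b) ∧
      (∀ ε > (0 : ℝ), ∃ n₀ : ℕ, ∀ a ∈ A, n₀ ≤ a.length → lam a < ε) ∧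
      HasLevelSum A (fun a => lam a • y a) x}) :
    TopsCoincide L :=
  stmt13_general P hc0 A hA y hbdd I hsupp hdisj hy0 L hL
end
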